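/- In the five-element poset P = {p, q, r, s, t} with order generated by q ≤ s, r ≤ s, t ≤ p, t ≤ s (where s plays the role of q∨r and t of p∧(q∨r)): the pairwise meets p∧q and p∧r do not exist in P, yet P is representable via the assignment p ↦ {a,c,d}, q ↦ {b,d}, r ↦ {b,c} (with s ↦ {b,c,d}, t ↦ {c,d}) into subsets of {a,b,c,d}; this map is an order embedding preserving all existing finite meets as intersections and all existing finite joins as unions. -/

import Mathlib

/-- The five-element poset `{p, q, r, s, t}` with order generated by
`q ≤ s`, `r ≤ s`, `t ≤ p`, `t ≤ s` (so `s = q ∨ r` and `t = p ∧ (q ∨ r)`). -/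
inductive P9 : Type
  | p | q | r | s | t
deriving DecidableEq

instance : Fintype P9 where
  elems := {.p, .q, .r, .s, .t}
  complete := by intro x; cases x <;> simp

namespace P9

def ble : P9 → P9 → Bool
  | .q, .s => true
  | .r, .s => true
  | .t, .p => true
  | .t, .s => true
  | a, b => a = b

instance : PartialOrder P9 where
  le a b := ble a b = true
  le_refl := by
    show ∀ a : P9, ble a a = true
    decide
  le_trans := by
    show ∀ a b c : P9, ble a b = true → ble b c = true → ble a c = true
    decide
  le_antisymm := by
    show ∀ a b : P9, ble a b = true → ble b a = true → a = b
    decide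

/-- The representing map into subsets of `Fin 4` (`a = 0`, `b = 1`, `c = 2`, `d = 3`):
`p ↦ {a,c,d}`, `q ↦ {b,d}`, `r ↦ {b,c}`, `s ↦ {b,c,d}`, `t ↦ {c,d}`. -/
def f : P9 → Set (Fin 4)
  | .p => {0, 2, 3}
  | .q => {1, 3}
  | .r => {1, 2}
  | .s => {1, 2, 3}
  | .t => {2, 3}

end P9

/-!
Each point `v` of `Fin 4` is missing from `f x` exactly when `x` lies below one element
`excl v` of `P9` (`s`, `p`, `q`, `r` for `a`, `b`, `c`, `d`), so `f x = {v | ¬ x ≤ excl v}`;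
maps of this shape send every existing join to a union. On the meet side, a meet in `P9` lies in
its set unless it is `t`, and then the set contains `p` and `s`, while `f t = f p ∩ f s`.
Finally `p` has no common lower bound with `q` or with `r`.
-/

section

variable {α β : Type*} [Preorder α]

theorem IsLUB.setOf_not_le_eq_biUnion (g : β → α) {S : Set α} {j : α} (h : IsLUB S j) :
    {v | ¬ j ≤ g v} = ⋃ x ∈ S, {v | ¬ x ≤ g v} := by
  ext v
  simp [isLUB_le_iff h, mem_upperBounds]

theorem IsLeast.biInter_eq {f : α → Set β} (hf : Monotone f) {S : Set α} {m : α}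
    (h : IsLeast S m) : ⋂ x ∈ S, f x = f m :=
  (Set.biInter_subset_of_mem h.1).antisymm (Set.subset_iInter₂ fun _ hx => hf (h.2 hx))

end

namespace P9

instance : DecidableLE P9 := fun a b => inferInstanceAs (Decidable (ble a b = true))

def excl : Fin 4 → P9 := ![s, p, q, r]

theorem f_eq_setOf_not_le (x : P9) : f x = {v | ¬ x ≤ excl v} := by
  ext v
  cases x <;> simp only [f, Set.mem_insert_iff, Set.mem_singleton_iff, Set.mem_ofPred_eq] <;>
    revert v <;> decide

theorem le_iff_f_subset (a b : P9) : a ≤ b ↔ f a ⊆ f b := by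
  rw [f_eq_setOf_not_le, f_eq_setOf_not_le, Set.ofPred_subset_ofPred]
  revert a b
  decide

theorem monotone_f : Monotone f := fun a b => (le_iff_f_subset a b).1

theorem f_t_eq_inter : f t = f p ∩ f s := by
  ext v
  fin_cases v <;> simp [f]

theorem mem_or_eq_t_of_isGLB {S : Set P9} {m : P9} (h : IsGLB S m) :
    m ∈ S ∨ (m = t ∧ p ∈ S ∧ s ∈ S) := by
  obtain ⟨T, rfl⟩ := S.toFinite.exists_finset_coe
  simp only [IsGLB, IsGreatest, mem_lowerBounds, mem_upperBounds, Finset.mem_coe] at h ⊢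
  revert T m
  decide

theorem f_isGLB_eq_biInter {S : Set P9} {m : P9} (h : IsGLB S m) :
    f m = ⋂ x ∈ S, f x := by
  rcases mem_or_eq_t_of_isGLB h with hm | ⟨rfl, hp, hs⟩
  · exact (IsLeast.biInter_eq monotone_f ⟨hm, h.1⟩).symm
  · refine subset_antisymm (Set.subset_iInter₂ fun x hx => monotone_f (h.1 hx)) ?_
    rw [f_t_eq_inter]
    exact Set.subset_inter (Set.biInter_subset_of_mem hp) (Set.biInter_subset_of_mem hs)

theorem f_isLUB_eq_biUnion {S : Set P9} {j : P9} (h : IsLUB S j) : f j = ⋃ x ∈ S, f x := by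
  simp only [f_eq_setOf_not_le]
  exact h.setOf_not_le_eq_biUnion excl

theorem not_bddBelow_p_pair {x : P9} (hx : x = q ∨ x = r) : ¬ BddBelow ({p, x} : Set P9) := by
  have no_lower_bound : ∀ m, m ≤ p → ¬ m ≤ x := by rcases hx with rfl | rfl <;> decide
  rintro ⟨m, hm⟩
  exact no_lower_bound m (hm (Set.mem_insert p _)) (hm (Set.mem_insert_of_mem p rfl))

end P9

/-- In `P9`, the meets `p ∧ q` and `p ∧ r` do not exist, yet the map `f`
is a representation of `P9`: an order embedding into `℘(Fin 4)` sending all existing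
(finite) meets to intersections and all existing (finite) joins to unions.  (Hence the
condition LMD is not necessary for representability.) -/
theorem P9_representable_but_meets_fail :
    (¬ ∃ m : P9, IsGLB {P9.p, P9.q} m) ∧
    (¬ ∃ m : P9, IsGLB {P9.p, P9.r} m) ∧
    (∀ a b : P9, a ≤ b ↔ P9.f a ⊆ P9.f b) ∧
    (∀ (S : Set P9) (m : P9), S.Nonempty → IsGLB S m → P9.f m = ⋂ x ∈ S, P9.f x) ∧
    (∀ (S : Set P9) (j : P9), S.Nonempty → IsLUB S j → P9.f j = ⋃ x ∈ S, P9.f x) :=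
  ⟨fun ⟨_, hm⟩ => P9.not_bddBelow_p_pair (.inl rfl) hm.bddBelow,
    fun ⟨_, hm⟩ => P9.not_bddBelow_p_pair (.inr rfl) hm.bddBelow,
    P9.le_iff_f_subset,
    fun _ _ _ hm => P9.f_isGLB_eq_biInter hm,
    fun _ _ _ hj => P9.f_isLUB_eq_biUnion hj⟩
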